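/- arXiv:1909.09870 — 4 statements merged into one kernel-verified Lean document; each statement's English description precedes it below -/
import Mathlib

section
/- Let G be a bridgeless cubic graph with a 2-bisection V(G) = B ∪ W, and let X ⊆ V(G) be a good subset (i.e., X minimizes the ratio |∂(Y)|/Δ(Y) over all subsets Y with Δ(Y) > 0) with |B ∩ X| > |W ∩ X| and |∂(X)|/Δ(X) > 1. Then every vertex of X incident to an edge of ∂(X) is black, i.e., ∂_V(X) ⊆ B. -/
open Classical Finset

noncomputable section

variable {V : Type*} [Fintype V] [DecidableEq V]

/-- Number of edges with exactly one endpoint in `X` (counted as ordered pairs (in, out)). -/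
def boundaryCard (G : SimpleGraph V) (X : Finset V) : ℕ :=
  ((X ×ˢ Xᶜ).filter fun p => G.Adj p.1 p.2).card

/-- `Δ(X) = ||B ∩ X| - |W ∩ X||`. -/
def bisDelta (B W X : Finset V) : ℕ :=
  (((B ∩ X).card : ℤ) - ((W ∩ X).card : ℤ)).natAbs

/-- The ratio `|∂(X)| / Δ(X)` as a rational number. -/
def ratio (G : SimpleGraph V) (B W X : Finset V) : ℚ :=
  (boundaryCard G X : ℚ) / (bisDelta B W X : ℚ)

/-- A 2-bisection: a partition `V = B ∪ W` with `|B| = |W|` such that every component of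
the induced subgraphs on `B` and on `W` has at most 2 vertices (equivalently, every vertex
has at most one neighbour of its own colour). -/
def IsTwoBisection (G : SimpleGraph V) (B W : Finset V) : Prop :=
  B ∪ W = Finset.univ ∧ B ∩ W = ∅ ∧ B.card = W.card ∧
    (∀ v ∈ B, (B.filter (G.Adj v)).card ≤ 1) ∧
    (∀ v ∈ W, (W.filter (G.Adj v)).card ≤ 1)

/-- A subset is good if it has positive `Δ` and minimizes the ratio `|∂(Y)|/Δ(Y)`
over all subsets `Y` with `Δ(Y) > 0`. -/
def IsGood (G : SimpleGraph V) (B W X : Finset V) : Prop :=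
  0 < bisDelta B W X ∧
    ∀ Y : Finset V, 0 < bisDelta B W Y → ratio G B W X ≤ ratio G B W Y

def IsCubic (G : SimpleGraph V) : Prop := ∀ v : V, G.degree v = 3

def Bridgeless (G : SimpleGraph V) : Prop := ∀ e ∈ G.edgeSet, ¬ G.IsBridge e

theorem stmt2 (G : SimpleGraph V) (B W : Finset V)
    (hcubic : IsCubic G) (hbridgeless : Bridgeless G)
    (hbis : IsTwoBisection G B W) (X : Finset V)
    (hgood : IsGood G B W X)
    (hbw : (W ∩ X).card < (B ∩ X).card)
    (hratio : 1 < ratio G B W X) :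
    ∀ v ∈ X, (∃ u, u ∉ X ∧ G.Adj v u) → v ∈ B := by
  intro v hvX ⟨u, huX, hadj⟩
  by_contra hvB
  have hvW : v ∈ W := by
    have h1 : v ∈ B ∪ W := by rw [hbis.1]; exact mem_univ v
    rcases mem_union.1 h1 with h | h
    · exact absurd h hvB
    · exact h
  set Y := X.erase v with hY
  -- delta computation
  have hBY : B ∩ Y = B ∩ X := by
    rw [hY, Finset.inter_erase, Finset.erase_eq_of_notMem]
    simp [hvB]
  have hWY : (W ∩ Y).card = (W ∩ X).card - 1 := by
    rw [hY, Finset.inter_erase, Finset.card_erase_of_mem (mem_inter.2 ⟨hvW, hvX⟩)]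
  have hWXpos : 0 < (W ∩ X).card := Finset.card_pos.2 ⟨v, mem_inter.2 ⟨hvW, hvX⟩⟩
  have hdY : bisDelta B W Y = bisDelta B W X + 1 := by
    unfold bisDelta
    rw [hBY, hWY]
    omega
  -- boundary computation
  set S := ((X ×ˢ Xᶜ).filter fun p => G.Adj p.1 p.2) with hS
  set dout := (Xᶜ.filter (fun w => G.Adj v w)).card with hdout
  set din := ((X.erase v).filter (fun w => G.Adj w v)).card with hdin
  have hdoutpos : 0 < dout := Finset.card_pos.2 ⟨u, by simp [huX, hadj]⟩
  have hdeg : din + dout = 3 := by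
    have h3 : (univ.filter (fun w => G.Adj v w)).card = 3 := by
      have hn : univ.filter (fun w => G.Adj v w) = G.neighborFinset v := by
        ext w; simp [SimpleGraph.mem_neighborFinset]
      rw [hn, SimpleGraph.card_neighborFinset_eq_degree]
      exact hcubic v
    have hsplit : univ.filter (fun w => G.Adj v w)
        = (X.filter (fun w => G.Adj v w)) ∪ (Xᶜ.filter (fun w => G.Adj v w)) := by
      rw [← Finset.filter_union, Finset.union_compl]
    have hdisj : Disjoint (X.filter (fun w => G.Adj v w)) (Xᶜ.filter (fun w => G.Adj v w)) :=
      Finset.disjoint_filter_filter disjoint_compl_right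
    have hXfilter : (X.filter (fun w => G.Adj v w)) = ((X.erase v).filter (fun w => G.Adj w v)) := by
      ext w
      simp only [mem_filter, mem_erase]
      constructor
      · rintro ⟨hw, ha⟩
        exact ⟨⟨fun he => by subst he; exact G.irrefl ha, hw⟩, ha.symm⟩
      · rintro ⟨⟨_, hw⟩, ha⟩
        exact ⟨hw, ha.symm⟩
    rw [hsplit, Finset.card_union_of_disjoint hdisj, hXfilter] at h3
    omega
  -- edges of S starting at v
  have hSv : (S.filter (fun p => p.1 = v)).card = dout := by
    apply Finset.card_bij (fun p _ => p.2)
    · rintro ⟨a, b⟩ hp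
      simp only [hS, mem_filter, mem_product, mem_compl] at hp
      obtain ⟨⟨⟨_, hb⟩, ha⟩, he⟩ := hp
      subst he
      simp [hb, ha]
    · rintro ⟨a, b⟩ hp ⟨c, d⟩ hq he
      simp only [hS, mem_filter, mem_product] at hp hq
      simp only at he
      have : a = v := hp.2
      have : c = v := hq.2
      simp_all
    · intro w hw
      simp only [mem_filter, mem_compl] at hw
      refine ⟨(v, w), ?_, rfl⟩
      simp [hS, hvX, hw.1, hw.2]
  have hSle : dout ≤ S.card := by
    rw [← hSv]; exact Finset.card_filter_le _ _
  -- boundary of Y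
  have hbY : boundaryCard G Y = (S.card - dout) + din := by
    have hunion : ((Y ×ˢ Yᶜ).filter fun p => G.Adj p.1 p.2)
        = (S.filter (fun p => p.1 ≠ v)) ∪ (((X.erase v).filter (fun w => G.Adj w v)).image (fun w => (w, v))) := by
      ext ⟨a, b⟩
      simp only [hY, hS, mem_union, mem_filter, mem_product, mem_compl, mem_erase, mem_image,
        Prod.mk.injEq, ne_eq, not_and, not_not]
      constructor
      · rintro ⟨⟨⟨hav, haX⟩, hb⟩, hadj'⟩
        by_cases hbv : b = v
        · exact Or.inr ⟨a, ⟨⟨hav, haX⟩, hbv ▸ hadj'⟩, rfl, hbv.symm⟩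
        · exact Or.inl ⟨⟨⟨haX, hb hbv⟩, hadj'⟩, hav⟩
      · rintro (⟨⟨⟨haX, hbX⟩, hadj'⟩, hav⟩ | ⟨w, ⟨⟨hwv, hwX⟩, hadj'⟩, hwa, hvb⟩)
        · exact ⟨⟨⟨hav, haX⟩, fun _ => hbX⟩, hadj'⟩
        · subst hwa; subst hvb
          exact ⟨⟨⟨hwv, hwX⟩, fun hc => absurd rfl hc⟩, hadj'⟩
    have hdisj2 : Disjoint (S.filter (fun p => p.1 ≠ v))
        (((X.erase v).filter (fun w => G.Adj w v)).image (fun w => (w, v))) := by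
      rw [Finset.disjoint_left]
      rintro ⟨a, b⟩ hp hq
      simp only [hS, mem_filter, mem_product, mem_compl, mem_image, mem_erase,
        Prod.mk.injEq, ne_eq] at hp hq
      obtain ⟨w, _, _, hvb⟩ := hq
      exact hp.1.1.2 (hvb ▸ hvX)
    have hinj : ((((X.erase v).filter (fun w => G.Adj w v))).image (fun w => (w, v))).card = din := by
      rw [Finset.card_image_of_injective _ (fun a b h => congrArg Prod.fst h)]
    have hcompl : (S.filter (fun p => p.1 ≠ v)).card = S.card - dout := by
      have hsum := Finset.card_filter_add_card_filter_not (s := S) (p := fun p => p.1 = v)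
      rw [hSv] at hsum
      have h2 : S.filter (fun p => ¬ p.1 = v) = S.filter (fun p => p.1 ≠ v) := by
        apply Finset.filter_congr; intro p _; simp
      rw [h2] at hsum
      omega
    rw [boundaryCard, hunion, Finset.card_union_of_disjoint hdisj2, hinj, hcompl]
  have hbXeq : boundaryCard G X = S.card := rfl
  have hbYle : boundaryCard G Y ≤ boundaryCard G X + 1 := by
    rw [hbY, hbXeq]; omega
  -- ratio contradiction
  have hdXpos : 0 < bisDelta B W X := hgood.1
  have hkey := hgood.2 Y (by rw [hdY]; omega)
  set b := boundaryCard G X with hb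
  set d := bisDelta B W X with hd
  have hbd : (d : ℚ) < b := by
    rw [ratio, lt_div_iff₀ (by exact_mod_cast hdXpos)] at hratio
    linarith
  rw [ratio, ratio, hdY, div_le_div_iff₀ (by exact_mod_cast hdXpos) (by positivity)] at hkey
  have hbY2 : (boundaryCard G Y : ℚ) ≤ (b : ℚ) + 1 := by exact_mod_cast hbYle
  have hd0 : (0:ℚ) < d := by exact_mod_cast hdXpos
  push_cast at hkey
  nlinarith [hkey, hbY2, hbd, hd0]
end
end

section
/- Let G be a bridgeless cubic graph with a 2-bisection V(G) = B ∪ W and a good subset X ⊆ V(G) with |B ∩ X| > |W ∩ X| and |∂(X)|/Δ(X) ≤ 1. Then there exists a nonempty subset X' ⊆ X such that every vertex of X' with a neighbor outside X' is black, and |∂(X')|/Δ(X') ≤ 1. -/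
open Classical Finset

noncomputable section

variable {V : Type*} [Fintype V] [DecidableEq V]

lemma boundary_sum (G : SimpleGraph V) (X : Finset V) :
    boundaryCard G X = ∑ u ∈ X, (Xᶜ.filter (G.Adj u)).card := by
  unfold boundaryCard
  rw [Finset.card_filter, Finset.sum_product]
  exact Finset.sum_congr rfl fun u _ => (Finset.card_filter _ _).symm

lemma boundary_erase (G : SimpleGraph V) (X : Finset V) (w : V) (hw : w ∈ X) :
    boundaryCard G (X.erase w) + (Xᶜ.filter (G.Adj w)).card
      = boundaryCard G X + ((X.erase w).filter (G.Adj w)).card := by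
  have hcompl : (X.erase w)ᶜ = insert w Xᶜ := by
    ext v
    simp only [Finset.mem_compl, Finset.mem_erase, Finset.mem_insert, not_and_or, not_not]
  have hwXc : w ∉ Xᶜ := by simp [hw]
  have hsum : ∀ u, ((X.erase w)ᶜ.filter (G.Adj u)).card
      = (Xᶜ.filter (G.Adj u)).card + (if G.Adj u w then 1 else 0) := by
    intro u
    rw [hcompl, Finset.filter_insert]
    by_cases h : G.Adj u w
    · rw [if_pos h, Finset.card_insert_of_notMem (by simp [hwXc]), if_pos h]
    · rw [if_neg h, if_neg h, add_zero]
  rw [boundary_sum, boundary_sum]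
  rw [Finset.sum_congr rfl (fun u _ => hsum u), Finset.sum_add_distrib]
  have h1 : ∑ u ∈ X.erase w, (Xᶜ.filter (G.Adj u)).card + (Xᶜ.filter (G.Adj w)).card
      = ∑ u ∈ X, (Xᶜ.filter (G.Adj u)).card := by
    rw [Finset.sum_erase_add X _ hw]
  have h2 : ∑ u ∈ X.erase w, (if G.Adj u w then 1 else 0)
      = ((X.erase w).filter (G.Adj w)).card := by
    rw [Finset.card_filter]
    exact Finset.sum_congr rfl (fun u _ => by rw [G.adj_comm])
  omega

lemma degree_split (G : SimpleGraph V) (hcubic : IsCubic G) (X : Finset V) (w : V)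
    (hw : w ∈ X) :
    (Xᶜ.filter (G.Adj w)).card + ((X.erase w).filter (G.Adj w)).card = 3 := by
  have huni : (Xᶜ.filter (G.Adj w)) ∪ ((X.erase w).filter (G.Adj w)) = G.neighborFinset w := by
    ext u
    simp only [Finset.mem_union, Finset.mem_filter, Finset.mem_compl, Finset.mem_erase,
      SimpleGraph.mem_neighborFinset]
    constructor
    · rintro (⟨_, h⟩ | ⟨_, h⟩) <;> exact h
    · intro h
      by_cases hu : u ∈ X
      · right
        exact ⟨⟨(G.ne_of_adj h).symm, hu⟩, h⟩
      · left; exact ⟨hu, h⟩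
  have hdisj : Disjoint (Xᶜ.filter (G.Adj w)) ((X.erase w).filter (G.Adj w)) := by
    apply Finset.disjoint_filter_filter
    simp only [Finset.disjoint_left, Finset.mem_compl, Finset.mem_erase]
    tauto
  rw [← Finset.card_union_of_disjoint hdisj, huni,
    SimpleGraph.card_neighborFinset_eq_degree]
  exact hcubic w

lemma main_aux (G : SimpleGraph V) (B W : Finset V)
    (hcubic : IsCubic G) (hU : B ∪ W = Finset.univ) (hD : B ∩ W = ∅) :
    ∀ n (X : Finset V), (W ∩ X).card = n →
      (W ∩ X).card < (B ∩ X).card →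
      boundaryCard G X + (W ∩ X).card ≤ (B ∩ X).card →
      ∃ Z ⊆ X, Z.Nonempty ∧ 0 < bisDelta B W Z ∧
        (∀ v ∈ Z, (∃ u, u ∉ Z ∧ G.Adj v u) → v ∈ B) ∧
        ratio G B W Z ≤ 1 := by
  intro n
  induction n using Nat.strong_induction_on with
  | _ n ih =>
    intro X hn hlt hb
    by_cases hcase : ∃ w ∈ W ∩ X, ∃ u, u ∉ X ∧ G.Adj w u
    · obtain ⟨w, hwWX, u, huX, hadj⟩ := hcase
      have hwW : w ∈ W := (Finset.mem_inter.1 hwWX).1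
      have hwX : w ∈ X := (Finset.mem_inter.1 hwWX).2
      have hwB : w ∉ B := fun hwB => by
        have : w ∈ B ∩ W := Finset.mem_inter.2 ⟨hwB, hwW⟩
        simp [hD] at this
      have hBX' : B ∩ (X.erase w) = B ∩ X := by
        ext v
        simp only [Finset.mem_inter, Finset.mem_erase]
        constructor
        · tauto
        · rintro ⟨hvB, hvX⟩
          exact ⟨hvB, fun he => hwB (he ▸ hvB), hvX⟩
      have hWX' : W ∩ (X.erase w) = (W ∩ X).erase w := by
        ext v
        simp only [Finset.mem_inter, Finset.mem_erase]
        tauto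
      have hcard : (W ∩ (X.erase w)).card = n - 1 := by
        rw [hWX', Finset.card_erase_of_mem hwWX, hn]
      have hdout : 0 < (Xᶜ.filter (G.Adj w)).card :=
        Finset.card_pos.2 ⟨u, Finset.mem_filter.2 ⟨Finset.mem_compl.2 huX, hadj⟩⟩
      have hdeg := degree_split G hcubic X w hwX
      have herase := boundary_erase G X w hwX
      have hWe : ((W ∩ X).erase w).card = (W ∩ X).card - 1 :=
        Finset.card_erase_of_mem hwWX
      have hnpos : 0 < n := by
        rw [← hn]
        exact Finset.card_pos.2 ⟨w, hwWX⟩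
      have hbound' : boundaryCard G (X.erase w) + (W ∩ (X.erase w)).card
          ≤ (B ∩ (X.erase w)).card := by
        rw [hBX', hWX', hWe]
        omega
      have hlt' : (W ∩ (X.erase w)).card < (B ∩ (X.erase w)).card := by
        rw [hBX', hWX', hWe]
        omega
      obtain ⟨Z, hsub, hres⟩ := ih (n - 1) (by omega) (X.erase w) hcard hlt' hbound'
      exact ⟨Z, hsub.trans (Finset.erase_subset w X), hres⟩
    · push_neg at hcase
      refine ⟨X, Finset.Subset.refl X, ?_, ?_, ?_, ?_⟩
      · obtain ⟨v, hv⟩ := Finset.card_pos.1 ((Nat.zero_le _).trans_lt hlt)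
        exact ⟨v, (Finset.mem_inter.1 hv).2⟩
      · unfold bisDelta
        omega
      · intro v hvX ⟨u, huX, hadj⟩
        have hvU : v ∈ B ∪ W := by rw [hU]; exact Finset.mem_univ v
        rcases Finset.mem_union.1 hvU with h | h
        · exact h
        · exact absurd hadj (hcase v (Finset.mem_inter.2 ⟨h, hvX⟩) u huX)
      · unfold ratio
        have h1 : boundaryCard G X ≤ bisDelta B W X := by
          unfold bisDelta; omega
        have h2 : 0 < bisDelta B W X := by
          unfold bisDelta; omega
        rw [div_le_one (by exact_mod_cast h2)]
        exact_mod_cast h1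

theorem stmt4 (G : SimpleGraph V) (B W : Finset V)
    (hcubic : IsCubic G) (hbridgeless : Bridgeless G)
    (hbis : IsTwoBisection G B W) (X : Finset V)
    (hgood : IsGood G B W X)
    (hbw : (W ∩ X).card < (B ∩ X).card)
    (hratio : ratio G B W X ≤ 1) :
    ∃ X' ⊆ X, X'.Nonempty ∧ 0 < bisDelta B W X' ∧
      (∀ v ∈ X', (∃ u, u ∉ X' ∧ G.Adj v u) → v ∈ B) ∧
      ratio G B W X' ≤ 1 := by
  obtain ⟨hU, hD, -, -, -⟩ := hbis
  apply main_aux G B W hcubic hU hD (W ∩ X).card X rfl hbw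
  have h2 : 0 < bisDelta B W X := by
    unfold bisDelta; omega
  have h1 : boundaryCard G X ≤ bisDelta B W X := by
    have := (div_le_one (by exact_mod_cast h2 : (0:ℚ) < (bisDelta B W X : ℚ))).1 hratio
    exact_mod_cast this
  unfold bisDelta at h1
  omega
end
end

section
/- Suppose real numbers x_1, x_2, x_3, y_1, y_2 ∈ [1,4) satisfy x_1 + x_2 + x_3 = y_1 + y_2 = r and x_i + x_j ≥ 4 for all i ≠ j. Then r ≥ 6, there exists i with x_i ≤ r/3, and there exists j with y_j ≥ 1 + r/3; consequently there exist i, j with y_j − x_i ∈ [1,4). -/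
theorem stmt7 (x₁ x₂ x₃ y₁ y₂ r : ℝ)
    (hx₁ : 1 ≤ x₁ ∧ x₁ < 4) (hx₂ : 1 ≤ x₂ ∧ x₂ < 4) (hx₃ : 1 ≤ x₃ ∧ x₃ < 4)
    (hy₁ : 1 ≤ y₁ ∧ y₁ < 4) (hy₂ : 1 ≤ y₂ ∧ y₂ < 4)
    (hsumx : x₁ + x₂ + x₃ = r) (hsumy : y₁ + y₂ = r)
    (h12 : 4 ≤ x₁ + x₂) (h23 : 4 ≤ x₂ + x₃) (h13 : 4 ≤ x₁ + x₃) :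
    6 ≤ r ∧
    (x₁ ≤ r / 3 ∨ x₂ ≤ r / 3 ∨ x₃ ≤ r / 3) ∧
    (1 + r / 3 ≤ y₁ ∨ 1 + r / 3 ≤ y₂) ∧
    (∃ x ∈ ({x₁, x₂, x₃} : Set ℝ), ∃ y ∈ ({y₁, y₂} : Set ℝ),
      1 ≤ y - x ∧ y - x < 4) := by
  have hr : 6 ≤ r := by linarith
  have hx : x₁ ≤ r / 3 ∨ x₂ ≤ r / 3 ∨ x₃ ≤ r / 3 := by
    by_contra h; push_neg at h; linarith [h.1, h.2.1, h.2.2]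
  have hy : 1 + r / 3 ≤ y₁ ∨ 1 + r / 3 ≤ y₂ := by
    by_contra h; push_neg at h; linarith [h.1, h.2]
  refine ⟨hr, hx, hy, ?_⟩
  obtain hx' | hx' | hx' := hx <;> obtain hy' | hy' := hy
  · exact ⟨x₁, by simp, y₁, by simp, by linarith [hx₁.1, hy₁.2], by linarith [hx₁.1, hy₁.2]⟩
  · exact ⟨x₁, by simp, y₂, by simp, by linarith [hx₁.1, hy₂.2], by linarith [hx₁.1, hy₂.2]⟩
  · exact ⟨x₂, by simp, y₁, by simp, by linarith [hx₂.1, hy₁.2], by linarith [hx₂.1, hy₁.2]⟩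
  · exact ⟨x₂, by simp, y₂, by simp, by linarith [hx₂.1, hy₂.2], by linarith [hx₂.1, hy₂.2]⟩
  · exact ⟨x₃, by simp, y₁, by simp, by linarith [hx₃.1, hy₁.2], by linarith [hx₃.1, hy₁.2]⟩
  · exact ⟨x₃, by simp, y₂, by simp, by linarith [hx₃.1, hy₂.2], by linarith [hx₃.1, hy₂.2]⟩
end

section
/- Let G be a finite graph with a 2-bisection V(G) = B ∪ W, and suppose X ⊆ V(G) is a good subset (minimizing |∂(Y)|/Δ(Y) over Y with Δ(Y) > 0) such that G[X] is disconnected. Then every connected component A of G[X] with Δ(A) > 0 is also good. -/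
open Classical Finset

noncomputable section

variable {V : Type*} [Fintype V] [DecidableEq V]

lemma bisDelta_cast_q (B W Y : Finset V) :
    (bisDelta B W Y : ℚ) = |((B ∩ Y).card : ℚ) - ((W ∩ Y).card : ℚ)| := by
  unfold bisDelta
  rw [Nat.cast_natAbs]
  push_cast
  ring_nf

theorem stmt13 (G : SimpleGraph V) (B W : Finset V)
    (hbis : IsTwoBisection G B W) (X : Finset V)
    (hgood : IsGood G B W X)
    (n : ℕ) (hn : 2 ≤ n) (A : Fin n → Finset V)
    (hunion : X = Finset.univ.biUnion A)
    (hne : ∀ i, (A i).Nonempty)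
    (hdisj : ∀ i j, i ≠ j → Disjoint (A i) (A j))
    (hnoedge : ∀ i j, i ≠ j → ∀ u ∈ A i, ∀ v ∈ A j, ¬ G.Adj u v)
    (hconn : ∀ i, (G.induce ((A i : Finset V) : Set V)).Connected) :
    ∀ i, 0 < bisDelta B W (A i) → IsGood G B W (A i) := by
  have hmemX : ∀ v, v ∈ X ↔ ∃ i, v ∈ A i := by
    intro v; rw [hunion]; simp
  -- boundary of each part equals its edges to Xᶜ
  have hbA : ∀ i, boundaryCard G (A i)
      = (((A i) ×ˢ Xᶜ).filter fun p => G.Adj p.1 p.2).card := by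
    intro i
    unfold boundaryCard
    congr 1
    ext ⟨u, v⟩
    simp only [mem_filter, mem_product, mem_compl]
    constructor
    · rintro ⟨⟨hu, hv⟩, hadj⟩
      refine ⟨⟨hu, ?_⟩, hadj⟩
      intro hvX
      obtain ⟨j, hj⟩ := (hmemX v).1 hvX
      rcases eq_or_ne j i with rfl | hij
      · exact hv hj
      · exact hnoedge i j (Ne.symm hij) u hu v hj hadj
    · rintro ⟨⟨hu, hv⟩, hadj⟩
      exact ⟨⟨hu, fun hvA => hv ((hmemX v).2 ⟨i, hvA⟩)⟩, hadj⟩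
  -- boundary of X is the sum of boundaries of the parts
  have hbsum : (boundaryCard G X : ℚ) = ∑ i, (boundaryCard G (A i) : ℚ) := by
    have h : boundaryCard G X
        = ∑ i, (((A i) ×ˢ Xᶜ).filter fun p => G.Adj p.1 p.2).card := by
      unfold boundaryCard
      have heq : ((X ×ˢ Xᶜ).filter fun p => G.Adj p.1 p.2)
          = Finset.univ.biUnion fun i => (((A i) ×ˢ Xᶜ).filter fun p => G.Adj p.1 p.2) := by
        ext ⟨u, v⟩
        simp only [mem_filter, mem_product, mem_compl, mem_biUnion, mem_univ, true_and]
        constructor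
        · rintro ⟨⟨hu, hv⟩, hadj⟩
          obtain ⟨i, hi⟩ := (hmemX u).1 hu
          exact ⟨i, ⟨hi, hv⟩, hadj⟩
        · rintro ⟨i, ⟨⟨hu, hv⟩, hadj⟩⟩
          exact ⟨⟨(hmemX u).2 ⟨i, hu⟩, hv⟩, hadj⟩
      rw [heq, Finset.card_biUnion]
      intro i _ j _ hij
      refine Finset.disjoint_left.2 ?_
      rintro ⟨u, v⟩ hi hj
      simp only [mem_filter, mem_product] at hi hj
      exact (Finset.disjoint_left.1 (hdisj i j hij)) hi.1.1 hj.1.1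
    rw [h]
    push_cast
    exact Finset.sum_congr rfl fun i _ => by rw [hbA i]
  -- signed delta is additive
  have hdint : ((B ∩ X).card : ℚ) - ((W ∩ X).card : ℚ)
      = ∑ i, (((B ∩ A i).card : ℚ) - ((W ∩ A i).card : ℚ)) := by
    have hB : B ∩ X = Finset.univ.biUnion fun i => B ∩ A i := by
      ext v; simp only [mem_inter, mem_biUnion, mem_univ, true_and, hmemX]; tauto
    have hW : W ∩ X = Finset.univ.biUnion fun i => W ∩ A i := by
      ext v; simp only [mem_inter, mem_biUnion, mem_univ, true_and, hmemX]; tauto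
    have hdB : (B ∩ X).card = ∑ i, (B ∩ A i).card := by
      rw [hB]; exact Finset.card_biUnion fun i _ j _ hij =>
        (hdisj i j hij).mono inter_subset_right inter_subset_right
    have hdW : (W ∩ X).card = ∑ i, (W ∩ A i).card := by
      rw [hW]; exact Finset.card_biUnion fun i _ j _ hij =>
        (hdisj i j hij).mono inter_subset_right inter_subset_right
    rw [hdB, hdW]
    push_cast
    rw [Finset.sum_sub_distrib]
  have hDle : (bisDelta B W X : ℚ) ≤ ∑ i, (bisDelta B W (A i) : ℚ) := by
    rw [bisDelta_cast_q, hdint]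
    calc |∑ i, (((B ∩ A i).card : ℚ) - ((W ∩ A i).card : ℚ))|
        ≤ ∑ i, |((B ∩ A i).card : ℚ) - ((W ∩ A i).card : ℚ)| :=
          Finset.abs_sum_le_sum_abs _ _
      _ = ∑ i, (bisDelta B W (A i) : ℚ) := by
          exact Finset.sum_congr rfl fun i _ => (bisDelta_cast_q B W (A i)).symm
  -- arithmetic
  set r := ratio G B W X with hr
  have hDXpos : (0 : ℚ) < (bisDelta B W X : ℚ) := by exact_mod_cast hgood.1
  have hrX : (boundaryCard G X : ℚ) = r * (bisDelta B W X : ℚ) := by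
    rw [hr]
    unfold ratio
    field_simp
  have hrnn : 0 ≤ r := by
    rw [hr]; unfold ratio
    positivity
  have hterm : ∀ j : Fin n, r * (bisDelta B W (A j) : ℚ) ≤ (boundaryCard G (A j) : ℚ) := by
    intro j
    rcases Nat.eq_zero_or_pos (bisDelta B W (A j)) with h0 | hpos
    · rw [h0]; simp [Nat.cast_nonneg]
    · have hposq : (0 : ℚ) < (bisDelta B W (A j) : ℚ) := by exact_mod_cast hpos
      have := hgood.2 (A j) hpos
      rw [← hr] at this
      unfold ratio at this
      rw [le_div_iff₀ hposq] at this
      exact this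
  have hsum0 : ∑ j, ((boundaryCard G (A j) : ℚ) - r * (bisDelta B W (A j) : ℚ)) = 0 := by
    apply le_antisymm
    · rw [Finset.sum_sub_distrib, ← hbsum, hrX, sub_nonpos, ← Finset.mul_sum]
      exact mul_le_mul_of_nonneg_left hDle hrnn
    · exact Finset.sum_nonneg fun j _ => sub_nonneg.2 (hterm j)
  have heach : ∀ j : Fin n,
      (boundaryCard G (A j) : ℚ) = r * (bisDelta B W (A j) : ℚ) := by
    intro j
    have := (Finset.sum_eq_zero_iff_of_nonneg
      (fun j _ => sub_nonneg.2 (hterm j))).1 hsum0 j (mem_univ j)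
    linarith
  intro i hdi
  have hposq : (0 : ℚ) < (bisDelta B W (A i) : ℚ) := by exact_mod_cast hdi
  have hri : ratio G B W (A i) = r := by
    unfold ratio
    rw [heach i]
    field_simp
  exact ⟨hdi, fun Y hY => by rw [hri]; exact hgood.2 Y hY⟩
end
end
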